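/- arXiv:2605.08899 — 2 statements merged into one kernel-verified Lean document; each statement's English description precedes it below -/
import Mathlib

section
/- Let G : ℝ → ℝ be a continuous monotone non-decreasing function with values in [0,1] satisfying G(x) = 1 - G(-x) for all x. Then ∫_{-1}^{1} G(x) · (arctan x)/x dx = G_Catalan, where G_Catalan is Catalan's constant. -/
/-!
Substituting `x ↦ -x` and using `G (-x) = 1 - G x` turns the integral `I` into
`∫_{-1}^{1} arctan x / x - I`; as `arctan x / x` is even, `I = ∫_0^1 arctan x / x`.
Integrating `arctan x / x = ∑ (-1)^n x^(2n) / (2n+1)` termwise gives Catalan's constant: the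
partial sums of this alternating series lie between `0` and its first term `1`, so dominated
convergence applies.
-/

open Real Filter Finset MeasureTheory intervalIntegral
open scoped Topology

theorem sum_range_neg_one_pow_mul_mem_Icc {E : Type*} [Ring E] [PartialOrder E] [IsOrderedRing E]
    {f : ℕ → E} (hfa : Antitone f) (hf : ∀ n, 0 ≤ f n) (n : ℕ) :
    ∑ i ∈ range n, (-1) ^ i * f i ∈ Set.Icc 0 (f 0) := by
  induction n generalizing f with
  | zero => simpa using hf 0
  | succ n ih =>
    obtain ⟨hlo, hhi⟩ :=
      ih (hfa.comp_monotone fun _ _ h => Nat.succ_le_succ h) (fun i => hf (i + 1))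
    have hsplit : ∑ i ∈ range (n + 1), (-1) ^ i * f i
        = f 0 - ∑ i ∈ range n, (-1) ^ i * f (i + 1) := by
      simp [sum_range_succ', pow_succ, sum_neg_distrib, sub_eq_neg_add]
    rw [hsplit]
    exact ⟨sub_nonneg.2 (hhi.trans (hfa zero_le_one)), sub_le_self _ hlo⟩

theorem integral_neg_self_eq_two_mul_of_even {f : ℝ → ℝ} (hf : Function.Even f) {a : ℝ}
    (hfi : IntervalIntegrable f volume (-a) a) :
    ∫ x in -a..a, f x = 2 * ∫ x in 0..a, f x := by
  have h0 : (0 : ℝ) ∈ Set.uIcc (-a) a := by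
    rcases le_total 0 a with h | h <;> simp [h]
  have hreflect : ∫ x in -a..0, f x = ∫ x in 0..a, f x := by
    simpa [hf _] using (integral_comp_neg (a := 0) (b := a) f).symm
  rw [← integral_add_adjacent_intervals (hfi.mono_set (Set.uIcc_subset_uIcc_left h0))
    (hfi.mono_set (Set.uIcc_subset_uIcc_right h0)), hreflect]
  ring

theorem integral_mul_of_add_neg_eq_one {G f : ℝ → ℝ} (hG : ∀ x, G x + G (-x) = 1)
    (hf : Function.Even f) {a : ℝ} (hfi : IntervalIntegrable f volume (-a) a)
    (hGf : IntervalIntegrable (fun x => G x * f x) volume (-a) a) :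
    ∫ x in -a..a, G x * f x = ∫ x in 0..a, f x := by
  have hreflect : ∫ x in -a..a, G x * f x = (∫ x in -a..a, f x) - ∫ x in -a..a, G x * f x :=
    calc ∫ x in -a..a, G x * f x = ∫ x in -a..a, G (-x) * f (-x) := by
          rw [integral_comp_neg (fun x => G x * f x), neg_neg]
      _ = ∫ x in -a..a, (f x - G x * f x) := by
          congr 1 with x
          rw [hf x]
          linear_combination f x * hG x
      _ = (∫ x in -a..a, f x) - ∫ x in -a..a, G x * f x := integral_sub hfi hGf
  linarith [integral_neg_self_eq_two_mul_of_even hf hfi]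

theorem abs_arctan_le_abs (x : ℝ) : |arctan x| ≤ |x| := by
  simpa using Convex.norm_image_sub_le_of_norm_deriv_le (f := arctan) (C := 1)
    (fun y _ => (hasDerivAt_arctan y).differentiableAt)
    (fun y _ => by
      rw [(hasDerivAt_arctan y).deriv, norm_of_nonneg (by positivity)]
      exact div_le_one_of_le₀ (by nlinarith) (by positivity))
    convex_univ (Set.mem_univ 0) (Set.mem_univ x)

theorem abs_arctan_div_self_le_one (x : ℝ) : |arctan x / x| ≤ 1 := by
  rw [abs_div]
  exact div_le_one_of_le₀ (abs_arctan_le_abs x) (abs_nonneg x)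

theorem even_arctan_div_self : Function.Even fun x => arctan x / x := fun x => by
  simp only [arctan_neg, neg_div_neg_eq]

theorem intervalIntegrable_arctan_div_self (a b : ℝ) :
    IntervalIntegrable (fun x => arctan x / x) volume a b := by
  rw [intervalIntegrable_iff]
  refine Measure.integrableOn_of_bounded (M := 1) measure_Ioc_lt_top.ne
    (measurable_arctan.div measurable_id).aestronglyMeasurable (ae_of_all _ fun x => ?_)
  exact abs_arctan_div_self_le_one x

theorem tendsto_sum_arctan_series_div_self {x : ℝ} (hx : |x| < 1) (hx0 : x ≠ 0) :
    Tendsto (fun N => ∑ n ∈ range N, (-1) ^ n * (x ^ (2 * n) / (2 * n + 1))) atTop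
      (𝓝 (arctan x / x)) := by
  refine ((hasSum_arctan hx).div_const x).tendsto_sum_nat.congr fun N => ?_
  refine sum_congr rfl fun n _ => ?_
  push_cast
  field_simp
  ring

theorem abs_sum_arctan_series_le_one {x : ℝ} (hx : |x| ≤ 1) (N : ℕ) :
    |∑ n ∈ range N, (-1) ^ n * (x ^ (2 * n) / (2 * n + 1))| ≤ 1 := by
  have hx2 : x ^ 2 ≤ 1 := by nlinarith [abs_nonneg x, sq_abs x]
  have hanti : Antitone fun n : ℕ => x ^ (2 * n) / (2 * n + 1) := by
    refine antitone_nat_of_succ_le fun n => ?_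
    simp only [pow_mul]
    apply div_le_div₀ (by positivity) (pow_le_pow_of_le_one (by positivity) hx2 n.le_succ)
      (by positivity)
    push_cast
    linarith
  obtain ⟨hlo, hhi⟩ :=
    sum_range_neg_one_pow_mul_mem_Icc hanti (fun n => by rw [pow_mul]; positivity) N
  norm_num at hhi
  exact abs_le.2 ⟨by linarith, hhi⟩

theorem integral_sum_arctan_series (N : ℕ) :
    ∫ x in (0 : ℝ)..1, ∑ n ∈ range N, (-1) ^ n * (x ^ (2 * n) / (2 * n + 1))
      = ∑ n ∈ range N, (-1 : ℝ) ^ n / (2 * n + 1) ^ 2 := by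
  rw [integral_finsetSum fun n _ => (by fun_prop : Continuous _).intervalIntegrable _ _]
  refine sum_congr rfl fun n _ => ?_
  simp only [intervalIntegral.integral_const_mul, intervalIntegral.integral_div, integral_pow]
  push_cast
  field_simp
  simp

theorem summable_catalan_series : Summable fun n : ℕ => (-1 : ℝ) ^ n / (2 * n + 1) ^ 2 := by
  refine (summable_pow_div_add (1 : ℝ) 2 1 one_lt_two).of_norm_bounded fun n => ?_
  have hpos : (0 : ℝ) ≤ n + 1 := by positivity
  simp only [norm_div, norm_pow, norm_neg, norm_one, one_pow, Nat.cast_one,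
    Real.norm_of_nonneg hpos, Real.norm_of_nonneg (by positivity : (0 : ℝ) ≤ 2 * n + 1)]
  gcongr
  linarith

theorem integral_arctan_div_self :
    ∫ x in (0 : ℝ)..1, arctan x / x = ∑' n : ℕ, (-1 : ℝ) ^ n / (2 * n + 1) ^ 2 := by
  refine tendsto_nhds_unique ?_ summable_catalan_series.hasSum.tendsto_sum_nat
  simp_rw [← integral_sum_arctan_series]
  refine tendsto_integral_filter_of_dominated_convergence (fun _ => 1)
    (.of_forall fun N => (by fun_prop : Continuous _).aestronglyMeasurable)
    (.of_forall fun N => .of_forall fun x hx => ?_) intervalIntegrable_const ?_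
  · rw [Set.uIoc_of_le zero_le_one] at hx
    exact abs_sum_arctan_series_le_one (abs_le.2 ⟨by linarith [hx.1], hx.2⟩) N
  · filter_upwards [Measure.ae_ne volume 1] with x hx1 hx
    rw [Set.uIoc_of_le zero_le_one] at hx
    exact tendsto_sum_arctan_series_div_self
      (abs_lt.2 ⟨by linarith [hx.1], lt_of_le_of_ne hx.2 hx1⟩) hx.1.ne'

theorem catalan_single_integral_general (G : ℝ → ℝ)
    (hc : Continuous G)
    (hs : ∀ x, G x = 1 - G (-x)) :
    ∫ x in (-1:ℝ)..1, G x * (Real.arctan x / x)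
      = ∑' n : ℕ, (-1 : ℝ)^n / (2 * n + 1)^2 := by
  have hGf := (intervalIntegrable_arctan_div_self (-1) 1).continuousOn_mul hc.continuousOn
  rw [integral_mul_of_add_neg_eq_one (fun x => by linarith [hs x]) even_arctan_div_self
    (intervalIntegrable_arctan_div_self _ _) hGf, integral_arctan_div_self]

theorem catalan_single_integral (G : ℝ → ℝ)
    (hc : Continuous G) (hm : Monotone G)
    (hr : ∀ x, G x ∈ Set.Icc (0:ℝ) 1)
    (hs : ∀ x, G x = 1 - G (-x)) :
    ∫ x in (-1:ℝ)..1, G x * (Real.arctan x / x)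
      = ∑' n : ℕ, (-1 : ℝ)^n / (2 * n + 1)^2 :=
  catalan_single_integral_general G hc hs
end

section
/- ∫_{[0,1]³} (1 - (x₁x₂x₃)²)/(1 + (x₁x₂x₃)²)² dx₁ dx₂ dx₃ = G, where G is Catalan's constant. -/
/-!
Integrating out `x₃` is elementary, since `x / (1 + (a x)²)` is an antiderivative of the
integrand, and leaves `∫∫ 1 / (1 + (x₁ x₂)²)`. For `|x₁ x₂| < 1` this is a geometric series in
`(x₁ x₂)²`, and integrating term by term in `x₂` and then in `x₁` gives `∑ (-1)ⁿ / (2n+1)²`;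
both interchanges are justified because the integrals of the absolute values of the terms
are summable.
-/

open MeasureTheory Set

theorem integral_Ioo_zero_one_const_mul_pow (c : ℝ) (k : ℕ) :
    ∫ x in Ioo (0:ℝ) 1, c * x ^ k = c / (k + 1) := by
  rw [← integral_Ioc_eq_integral_Ioo, ← intervalIntegral.integral_of_le zero_le_one,
    intervalIntegral.integral_const_mul, integral_pow]
  simp [div_eq_mul_inv]

theorem hasSum_integral_Ioo_zero_one_tsum_mul_pow {c : ℕ → ℝ} {k : ℕ → ℕ}
    (hc : Summable fun n ↦ |c n| / (k n + 1)) :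
    HasSum (fun n ↦ c n / (k n + 1)) (∫ x in Ioo (0:ℝ) 1, ∑' n, c n * x ^ k n) := by
  have h_norm : ∀ n, ∫ x in Ioo (0:ℝ) 1, ‖c n * x ^ k n‖ = |c n| / (k n + 1) := fun n ↦ by
    rw [← integral_Ioo_zero_one_const_mul_pow]
    refine setIntegral_congr_fun measurableSet_Ioo fun x hx ↦ ?_
    rw [norm_mul, Real.norm_eq_abs, norm_pow, Real.norm_of_nonneg hx.1.le]
  have h_int : ∀ n, IntegrableOn (fun x : ℝ ↦ c n * x ^ k n) (Ioo 0 1) :=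
    fun n ↦ (continuous_const.mul (continuous_pow _)).integrableOn_Icc.mono_set Ioo_subset_Icc_self
  simpa only [integral_Ioo_zero_one_const_mul_pow] using
    hasSum_integral_of_summable_integral_norm h_int (by simpa only [h_norm] using hc)

theorem hasSum_neg_one_pow_mul_pow_two_mul {u : ℝ} (hu : |u| < 1) :
    HasSum (fun n : ℕ ↦ (-1) ^ n * u ^ (2 * n)) (1 / (1 + u ^ 2)) := by
  have h : |-u ^ 2| < 1 := by
    rw [abs_neg, abs_pow]
    exact pow_lt_one₀ (abs_nonneg u) hu two_ne_zero
  convert hasSum_geometric_of_abs_lt_one h using 1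
  · ext n; ring
  · rw [sub_neg_eq_add, one_div]

theorem integral_one_sub_sq_div_one_add_sq_sq (a : ℝ) :
    ∫ x in (0:ℝ)..1, (1 - (a * x) ^ 2) / (1 + (a * x) ^ 2) ^ 2 = 1 / (1 + a ^ 2) := by
  have hpos : ∀ x : ℝ, 0 < 1 + (a * x) ^ 2 := fun x ↦ by positivity
  have h_deriv : ∀ x ∈ uIcc (0:ℝ) 1, HasDerivAt (fun y ↦ y / (1 + (a * y) ^ 2))
      ((1 - (a * x) ^ 2) / (1 + (a * x) ^ 2) ^ 2) x := fun x _ ↦ by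
    have h_den : HasDerivAt (fun y ↦ 1 + (a * y) ^ 2) (2 * (a * x) * a) x := by
      simpa using (((hasDerivAt_id x).const_mul a).pow 2).const_add 1
    refine ((hasDerivAt_id' x).div h_den (hpos x).ne').congr_deriv ?_
    ring
  have h_cont : Continuous fun x ↦ (1 - (a * x) ^ 2) / (1 + (a * x) ^ 2) ^ 2 := by
    fun_prop (disch := exact fun x ↦ (pow_pos (hpos x) 2).ne')
  rw [intervalIntegral.integral_eq_sub_of_hasDerivAt h_deriv (h_cont.intervalIntegrable 0 1)]
  norm_num

theorem integral_one_div_one_add_mul_sq {b : ℝ} (hb : |b| < 1) :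
    ∫ x in (0:ℝ)..1, 1 / (1 + (b * x) ^ 2) = ∑' n : ℕ, (-1) ^ n * b ^ (2 * n) / (2 * n + 1) := by
  have h_series : EqOn (fun x : ℝ ↦ 1 / (1 + (b * x) ^ 2))
      (fun x ↦ ∑' n : ℕ, (-1) ^ n * b ^ (2 * n) * x ^ (2 * n)) (Ioo 0 1) := fun x hx ↦ by
    have hbx : |b * x| < 1 := by
      rw [abs_mul, abs_of_pos hx.1]
      nlinarith [abs_nonneg b, hx.2]
    simp only [mul_assoc, ← mul_pow]
    exact (hasSum_neg_one_pow_mul_pow_two_mul hbx).tsum_eq.symm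
  have h_summable : Summable fun n : ℕ ↦ |(-1) ^ n * b ^ (2 * n)| / ((2 * n : ℕ) + 1 : ℝ) := by
    refine (summable_geometric_of_lt_one (sq_nonneg b) ?_).of_nonneg_of_le
      (fun n ↦ by positivity) fun n ↦ ?_
    · rwa [← sq_abs, sq_lt_one_iff_abs_lt_one, abs_abs]
    · rw [abs_mul, abs_neg_one_pow, one_mul, pow_mul, abs_of_nonneg (by positivity)]
      exact div_le_self (by positivity) (by simp)
  rw [intervalIntegral.integral_of_le zero_le_one, integral_Ioc_eq_integral_Ioo,
    setIntegral_congr_fun measurableSet_Ioo h_series,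
    ← (hasSum_integral_Ioo_zero_one_tsum_mul_pow h_summable).tsum_eq]
  push_cast
  rfl

theorem summable_one_div_two_mul_add_one_sq :
    Summable fun n : ℕ ↦ 1 / ((2 * n + 1) ^ 2 : ℝ) := by
  have h_shift : Summable fun n : ℕ ↦ 1 / ((n + 1 : ℕ) : ℝ) ^ 2 :=
    (summable_nat_add_iff 1).mpr (Real.summable_one_div_nat_pow.mpr one_lt_two)
  refine h_shift.of_nonneg_of_le (fun n ↦ by positivity) fun n ↦ ?_
  gcongr
  push_cast
  linarith [n.cast_nonneg (α := ℝ)]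

theorem catalan_triple_integral :
    ∫ x₁ in (0:ℝ)..1, ∫ x₂ in (0:ℝ)..1, ∫ x₃ in (0:ℝ)..1,
        (1 - (x₁ * x₂ * x₃)^2) / (1 + (x₁ * x₂ * x₃)^2)^2
      = ∑' n : ℕ, (-1 : ℝ)^n / (2 * n + 1)^2 := by
  have h_summable : Summable fun n : ℕ ↦ |(-1) ^ n / (2 * n + 1 : ℝ)| / ((2 * n : ℕ) + 1 : ℝ) := by
    refine summable_one_div_two_mul_add_one_sq.congr fun n ↦ ?_
    rw [abs_div, abs_neg_one_pow, abs_of_pos (by positivity)]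
    push_cast
    rw [div_div, sq]
  calc _ = ∫ x₁ in (0:ℝ)..1, ∫ x₂ in (0:ℝ)..1, 1 / (1 + (x₁ * x₂) ^ 2) := by
        simp only [integral_one_sub_sq_div_one_add_sq_sq]
    -- on `Ioo 0 1`, where `|x₁| < 1` and the geometric series converges
    _ = ∫ x₁ in Ioo (0:ℝ) 1, ∑' n : ℕ, (-1) ^ n / (2 * n + 1 : ℝ) * x₁ ^ (2 * n) := by
        rw [intervalIntegral.integral_of_le zero_le_one, integral_Ioc_eq_integral_Ioo]
        refine setIntegral_congr_fun measurableSet_Ioo fun x hx ↦ ?_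
        rw [integral_one_div_one_add_mul_sq (abs_lt.mpr ⟨by linarith [hx.1], hx.2⟩)]
        simp only [mul_div_right_comm]
    _ = ∑' n : ℕ, (-1 : ℝ)^n / (2 * n + 1)^2 := by
        rw [← (hasSum_integral_Ioo_zero_one_tsum_mul_pow h_summable).tsum_eq]
        push_cast
        simp only [div_div, sq]
end
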